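/- If the second Hochschild cohomology group H²(A,A) of a finite-dimensional associative algebra A vanishes, then every formal one-parameter deformation of A is equivalent to the trivial deformation (A is formally rigid). -/

import Mathlib

/-- A formal one-parameter deformation of `m₀`, given by its coefficients. -/
def IsDeformationOf {K A : Type*} [Field K] [AddCommGroup A] [Module K A]
    (m₀ : A →ₗ[K] A →ₗ[K] A) (m : ℕ → A →ₗ[K] A →ₗ[K] A) : Prop :=
  m 0 = m₀ ∧ ∀ (k : ℕ) (x y z : A),
    ∑ p ∈ Finset.HasAntidiagonal.antidiagonal k,
      (m p.1 (m p.2 x y) z - m p.1 x (m p.2 y z)) = 0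

/-- Equivalence of formal deformations via `F_t = Id + t f₁ + ⋯`. -/
def AreEquivalentDeformations {K A : Type*} [Field K] [AddCommGroup A] [Module K A]
    (m m' : ℕ → A →ₗ[K] A →ₗ[K] A) : Prop :=
  ∃ F : ℕ → A →ₗ[K] A, F 0 = LinearMap.id ∧
    ∀ (k : ℕ) (x y : A),
      ∑ p ∈ Finset.HasAntidiagonal.antidiagonal k, F p.1 (m p.2 x y) =
        ∑ p ∈ Finset.HasAntidiagonal.antidiagonal k, ∑ q ∈ Finset.HasAntidiagonal.antidiagonal p.2,
          m' p.1 (F q.1 x) (F q.2 y)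

/-- The trivial deformation of `m₀`. -/
def TrivialDeformation {K A : Type*} [Field K] [AddCommGroup A] [Module K A]
    (m₀ : A →ₗ[K] A →ₗ[K] A) : ℕ → A →ₗ[K] A →ₗ[K] A :=
  fun k => if k = 0 then m₀ else 0

/-!
Build `F_t = Id + t F₁ + t² F₂ + ⋯` degree by degree. Suppose `F_t (μ_t x y)` and
`m₀ (F_t x) (F_t y)` agree below degree `n`. Expanding both bracketings of
`F_t (μ_t (μ_t x y) z)` and using associativity of `μ_t` and of `m₀` shows that the degree-`n`
discrepancy is a Hochschild 2-cocycle. It depends on `F_n` only through the term `-δ F_n`, so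
by `H²(A,A) = 0` one can choose `F_n` to make it vanish.
-/

open Finset

section Antidiagonal

variable {M : Type*} [AddCommMonoid M]

theorem sum_antidiagonal_sum_antidiagonal_snd (n : ℕ) (f : ℕ → ℕ → ℕ → M) :
    ∑ p ∈ antidiagonal n, ∑ q ∈ antidiagonal p.2, f p.1 q.1 q.2 =
      ∑ p ∈ antidiagonal n, ∑ q ∈ antidiagonal p.1, f q.1 q.2 p.2 := by
  simp only [sum_sigma']
  apply sum_nbij' (fun ⟨⟨i, _⟩, ⟨j, k⟩⟩ ↦ ⟨(i + j, k), (i, j)⟩)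
    (fun ⟨⟨_, k⟩, ⟨i, j⟩⟩ ↦ ⟨(i, j + k), (j, k)⟩) <;> aesop (add simp [add_assoc])

theorem sum_antidiagonal_sum_antidiagonal_fst_swap (n : ℕ) (f : ℕ → ℕ → ℕ → M) :
    ∑ p ∈ antidiagonal n, ∑ q ∈ antidiagonal p.1, f q.1 q.2 p.2 =
      ∑ p ∈ antidiagonal n, ∑ q ∈ antidiagonal p.1, f q.1 p.2 q.2 := by
  rw [← sum_antidiagonal_sum_antidiagonal_snd,
    ← sum_antidiagonal_sum_antidiagonal_snd n fun i j k => f i k j]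
  exact sum_congr rfl fun p _ => (Nat.sum_antidiagonal_swap ..).symm

theorem sum_antidiagonal_eq_of_fst_lt {n : ℕ} {f : ℕ × ℕ → M}
    (h : ∀ p ∈ antidiagonal n, p.1 < n → f p = 0) : ∑ p ∈ antidiagonal n, f p = f (n, 0) := by
  refine sum_eq_single_of_mem _ (by simp) fun ⟨a, b⟩ hp hne => h _ hp ?_
  simp only [HasAntidiagonal.mem_antidiagonal, ne_eq, Prod.mk.injEq] at hp hne
  omega

theorem sum_antidiagonal_eq_of_snd_lt {n : ℕ} {f : ℕ × ℕ → M}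
    (h : ∀ p ∈ antidiagonal n, p.2 < n → f p = 0) : ∑ p ∈ antidiagonal n, f p = f (0, n) := by
  refine sum_eq_single_of_mem _ (by simp) fun ⟨a, b⟩ hp hne => h _ hp ?_
  simp only [HasAntidiagonal.mem_antidiagonal, ne_eq, Prod.mk.injEq] at hp hne
  omega

theorem sum_antidiagonal_sub_sum_antidiagonal {M : Type*} [AddCommGroup M] {n : ℕ} (hn : n ≠ 0)
    {f g : ℕ × ℕ → M} (h : ∀ p ∈ antidiagonal n, p.1 < n → p.2 < n → f p = g p) :
    ∑ p ∈ antidiagonal n, f p - ∑ p ∈ antidiagonal n, g p =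
      f (n, 0) - g (n, 0) + (f (0, n) - g (0, n)) := by
  rw [← sum_sub_distrib]
  refine sum_eq_add_of_mem _ _ (by simp) (by simp) (by simp [hn]) fun ⟨a, b⟩ hp hne => ?_
  refine sub_eq_zero.2 (h _ hp ?_ ?_) <;>
    simp only [HasAntidiagonal.mem_antidiagonal, ne_eq, Prod.mk.injEq] at hp hne <;> omega

end Antidiagonal

section Hochschild

variable {K A : Type*} [CommSemiring K] [AddCommGroup A] [Module K A]

def IsHochschildCocycle (m₀ φ : A →ₗ[K] A →ₗ[K] A) : Prop :=
  ∀ x y z : A, m₀ x (φ y z) - φ (m₀ x y) z + φ x (m₀ y z) - m₀ (φ x y) z = 0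

def hochschildCoboundary (m₀ : A →ₗ[K] A →ₗ[K] A) (g : A →ₗ[K] A) : A →ₗ[K] A →ₗ[K] A :=
  m₀.compl₂ g - m₀.compr₂ g + m₀ ∘ₗ g

@[simp]
theorem hochschildCoboundary_apply (m₀ : A →ₗ[K] A →ₗ[K] A) (g : A →ₗ[K] A) (x y : A) :
    hochschildCoboundary m₀ g x y = m₀ x (g y) - g (m₀ x y) + m₀ (g x) y := by
  simp [hochschildCoboundary]

theorem IsHochschildCocycle.add {m₀ φ ψ : A →ₗ[K] A →ₗ[K] A} (hφ : IsHochschildCocycle m₀ φ)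
    (hψ : IsHochschildCocycle m₀ ψ) : IsHochschildCocycle m₀ (φ + ψ) := by
  intro x y z
  simp only [LinearMap.add_apply, map_add]
  linear_combination (norm := module) hφ x y z + hψ x y z

theorem isHochschildCocycle_hochschildCoboundary {m₀ : A →ₗ[K] A →ₗ[K] A}
    (hassoc : ∀ x y z, m₀ (m₀ x y) z = m₀ x (m₀ y z)) (g : A →ₗ[K] A) :
    IsHochschildCocycle m₀ (hochschildCoboundary m₀ g) := by
  intro x y z
  simp only [hochschildCoboundary_apply, map_add, map_sub, LinearMap.add_apply,
    LinearMap.sub_apply, hassoc]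
  abel

/-- The coefficient of `tⁿ` in `F_t (μ_t x y) - m₀ (F_t x) (F_t y)`, where `μ_t = ∑ tⁱ m i` and
`F_t = ∑ tⁱ F i`. -/
def homDefect (m₀ : A →ₗ[K] A →ₗ[K] A) (m : ℕ → A →ₗ[K] A →ₗ[K] A) (F : ℕ → A →ₗ[K] A)
    (n : ℕ) : A →ₗ[K] A →ₗ[K] A :=
  ∑ p ∈ antidiagonal n, ((m p.2).compr₂ (F p.1) - m₀.compl₁₂ (F p.1) (F p.2))

variable {m₀ : A →ₗ[K] A →ₗ[K] A} {m : ℕ → A →ₗ[K] A →ₗ[K] A} {F : ℕ → A →ₗ[K] A} {n : ℕ}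

theorem homDefect_apply (n : ℕ) (x y : A) :
    homDefect m₀ m F n x y =
      ∑ p ∈ antidiagonal n, F p.1 (m p.2 x y) - ∑ p ∈ antidiagonal n, m₀ (F p.1 x) (F p.2 y) := by
  simp [homDefect, LinearMap.sum_apply, sum_sub_distrib]

theorem sum_map_eq_add_homDefect (n : ℕ) (x y : A) :
    ∑ p ∈ antidiagonal n, F p.1 (m p.2 x y) =
      ∑ p ∈ antidiagonal n, m₀ (F p.1 x) (F p.2 y) + homDefect m₀ m F n x y := by
  rw [homDefect_apply, add_sub_cancel]

theorem homDefect_zero (hm0 : m 0 = m₀) (hF0 : F 0 = LinearMap.id) :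
    homDefect m₀ m F 0 = 0 := by
  ext x y
  simp [homDefect_apply, hm0, hF0]

theorem homDefect_eq_sub_hochschildCoboundary {G : ℕ → A →ₗ[K] A} (hn : n ≠ 0)
    (hm0 : m 0 = m₀) (hF0 : F 0 = LinearMap.id) (hFG : ∀ i < n, F i = G i) (hG : G n = 0) :
    homDefect m₀ m F n = homDefect m₀ m G n - hochschildCoboundary m₀ (F n) := by
  have hG0 : G 0 = LinearMap.id := hF0 ▸ (hFG 0 (Nat.pos_of_ne_zero hn)).symm
  ext x y
  have hmap := sum_antidiagonal_sub_sum_antidiagonal hn (f := fun p => F p.1 (m p.2 x y))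
    (g := fun p => G p.1 (m p.2 x y)) fun p _ h1 _ => by rw [hFG _ h1]
  have hmul := sum_antidiagonal_sub_sum_antidiagonal hn (f := fun p => m₀ (F p.1 x) (F p.2 y))
    (g := fun p => m₀ (G p.1 x) (G p.2 y)) fun p _ h1 h2 => by rw [hFG _ h1, hFG _ h2]
  simp only [hm0, hF0, hG, hG0, LinearMap.zero_apply, map_zero, LinearMap.id_apply, sub_self,
    sub_zero, add_zero] at hmap hmul
  simp only [homDefect_apply, LinearMap.sub_apply, hochschildCoboundary_apply]
  linear_combination (norm := module) hmap - hmul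

theorem sum_sum_map_assoc_left (hm0 : m 0 = m₀) (hF0 : F 0 = LinearMap.id)
    (hlow : ∀ k < n, homDefect m₀ m F k = 0) (x y z : A) :
    ∑ p ∈ antidiagonal n, ∑ q ∈ antidiagonal p.2, F p.1 (m q.1 (m q.2 x y) z) =
      ∑ p ∈ antidiagonal n, ∑ q ∈ antidiagonal p.1, m₀ (m₀ (F q.1 x) (F q.2 y)) (F p.2 z) +
        m₀ (homDefect m₀ m F n x y) z + homDefect m₀ m F n (m₀ x y) z := by
  calc _ = ∑ p ∈ antidiagonal n, ∑ q ∈ antidiagonal p.1, F q.1 (m q.2 (m p.2 x y) z) :=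
        sum_antidiagonal_sum_antidiagonal_snd n fun a b c => F a (m b (m c x y) z)
    _ = ∑ p ∈ antidiagonal n, ∑ q ∈ antidiagonal p.1, m₀ (F q.1 (m p.2 x y)) (F q.2 z) +
          homDefect m₀ m F n (m₀ x y) z := by
        simp only [sum_map_eq_add_homDefect (m₀ := m₀) _ (m _ x y) z, sum_add_distrib]
        rw [sum_antidiagonal_eq_of_fst_lt (f := fun p => homDefect m₀ m F p.1 (m p.2 x y) z)
          fun p _ hp => by rw [hlow _ hp]; rfl, hm0]
    _ = ∑ p ∈ antidiagonal n, m₀ (∑ q ∈ antidiagonal p.1, F q.1 (m q.2 x y)) (F p.2 z) +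
          homDefect m₀ m F n (m₀ x y) z := by
        rw [sum_antidiagonal_sum_antidiagonal_fst_swap n fun a b c => m₀ (F a (m c x y)) (F b z)]
        simp only [map_sum, LinearMap.sum_apply]
    _ = _ := by
        simp only [sum_map_eq_add_homDefect (m₀ := m₀) _ x y, map_add, LinearMap.add_apply,
          sum_add_distrib, map_sum, LinearMap.sum_apply]
        rw [sum_antidiagonal_eq_of_fst_lt (f := fun p => m₀ (homDefect m₀ m F p.1 x y) (F p.2 z))
          fun p _ hp => by rw [hlow _ hp]; simp, hF0, LinearMap.id_apply]

theorem sum_sum_map_assoc_right (hm0 : m 0 = m₀) (hF0 : F 0 = LinearMap.id)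
    (hlow : ∀ k < n, homDefect m₀ m F k = 0) (x y z : A) :
    ∑ p ∈ antidiagonal n, ∑ q ∈ antidiagonal p.2, F p.1 (m q.1 x (m q.2 y z)) =
      ∑ p ∈ antidiagonal n, ∑ q ∈ antidiagonal p.2, m₀ (F p.1 x) (m₀ (F q.1 y) (F q.2 z)) +
        m₀ x (homDefect m₀ m F n y z) + homDefect m₀ m F n x (m₀ y z) := by
  calc _ = ∑ p ∈ antidiagonal n, ∑ q ∈ antidiagonal p.1, F q.1 (m q.2 x (m p.2 y z)) :=
        sum_antidiagonal_sum_antidiagonal_snd n fun a b c => F a (m b x (m c y z))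
    _ = ∑ p ∈ antidiagonal n, ∑ q ∈ antidiagonal p.1, m₀ (F q.1 x) (F q.2 (m p.2 y z)) +
          homDefect m₀ m F n x (m₀ y z) := by
        simp only [sum_map_eq_add_homDefect (m₀ := m₀) _ x (m _ y z), sum_add_distrib]
        rw [sum_antidiagonal_eq_of_fst_lt (f := fun p => homDefect m₀ m F p.1 x (m p.2 y z))
          fun p _ hp => by rw [hlow _ hp]; rfl, hm0]
    _ = ∑ p ∈ antidiagonal n, m₀ (F p.1 x) (∑ q ∈ antidiagonal p.2, F q.1 (m q.2 y z)) +
          homDefect m₀ m F n x (m₀ y z) := by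
        rw [← sum_antidiagonal_sum_antidiagonal_snd n fun a b c => m₀ (F a x) (F b (m c y z))]
        simp only [map_sum]
    _ = _ := by
        simp only [sum_map_eq_add_homDefect (m₀ := m₀) _ y z, map_add, sum_add_distrib, map_sum]
        rw [sum_antidiagonal_eq_of_snd_lt (f := fun p => m₀ (F p.1 x) (homDefect m₀ m F p.2 y z))
          fun p _ hp => by rw [hlow _ hp]; simp, hF0, LinearMap.id_apply]

/-- The defect of the sequence truncated after degree `n` is the part of the degree-`(n + 1)`
defect not involving `F (n + 1)`; `F (n + 1)` is a `δ`-primitive of it, when one exists. -/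
noncomputable def rigidification (m₀ : A →ₗ[K] A →ₗ[K] A) (m : ℕ → A →ₗ[K] A →ₗ[K] A) :
    ℕ → A →ₗ[K] A
  | 0 => LinearMap.id
  | n + 1 => Function.invFun (hochschildCoboundary m₀)
      (homDefect m₀ m (fun i => if i ≤ n then rigidification m₀ m i else 0) (n + 1))

@[simp]
theorem rigidification_zero : rigidification m₀ m 0 = LinearMap.id := by
  rw [rigidification]

end Hochschild

section Deformation

variable {K A : Type*} [Field K] [AddCommGroup A] [Module K A]
  {m₀ : A →ₗ[K] A →ₗ[K] A} {m : ℕ → A →ₗ[K] A →ₗ[K] A} {F : ℕ → A →ₗ[K] A} {n : ℕ}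

theorem IsDeformationOf.sum_assoc (hm : IsDeformationOf m₀ m) (n : ℕ) (x y z : A) :
    ∑ p ∈ antidiagonal n, m p.1 (m p.2 x y) z = ∑ p ∈ antidiagonal n, m p.1 x (m p.2 y z) := by
  rw [← sub_eq_zero, ← sum_sub_distrib]
  exact hm.2 n x y z

theorem isHochschildCocycle_homDefect (hassoc : ∀ x y z, m₀ (m₀ x y) z = m₀ x (m₀ y z))
    (hm : IsDeformationOf m₀ m) (hF0 : F 0 = LinearMap.id)
    (hlow : ∀ k < n, homDefect m₀ m F k = 0) : IsHochschildCocycle m₀ (homDefect m₀ m F n) := by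
  intro x y z
  have hdef : ∑ p ∈ antidiagonal n, ∑ q ∈ antidiagonal p.2, F p.1 (m q.1 (m q.2 x y) z) =
      ∑ p ∈ antidiagonal n, ∑ q ∈ antidiagonal p.2, F p.1 (m q.1 x (m q.2 y z)) :=
    sum_congr rfl fun p _ => by rw [← map_sum, ← map_sum, hm.sum_assoc]
  have hmul : ∑ p ∈ antidiagonal n, ∑ q ∈ antidiagonal p.1, m₀ (m₀ (F q.1 x) (F q.2 y)) (F p.2 z) =
      ∑ p ∈ antidiagonal n, ∑ q ∈ antidiagonal p.2, m₀ (F p.1 x) (m₀ (F q.1 y) (F q.2 z)) := by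
    simp only [hassoc]
    exact (sum_antidiagonal_sum_antidiagonal_snd n fun a b c =>
      m₀ (F a x) (m₀ (F b y) (F c z))).symm
  rw [sum_sum_map_assoc_left hm.1 hF0 hlow, sum_sum_map_assoc_right hm.1 hF0 hlow, hmul] at hdef
  linear_combination (norm := module) -hdef

theorem homDefect_rigidification (hassoc : ∀ x y z, m₀ (m₀ x y) z = m₀ x (m₀ y z))
    (hm : IsDeformationOf m₀ m)
    (hH2 : ∀ φ, IsHochschildCocycle m₀ φ → ∃ g, hochschildCoboundary m₀ g = φ) (n : ℕ) :
    homDefect m₀ m (rigidification m₀ m) n = 0 := by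
  induction n using Nat.strong_induction_on with | _ n ih => ?_
  cases n with
  | zero => exact homDefect_zero hm.1 rigidification_zero
  | succ n =>
    set G : ℕ → A →ₗ[K] A := fun i => if i ≤ n then rigidification m₀ m i else 0
    have hsplit : homDefect m₀ m (rigidification m₀ m) (n + 1) =
        homDefect m₀ m G (n + 1) - hochschildCoboundary m₀ (rigidification m₀ m (n + 1)) :=
      homDefect_eq_sub_hochschildCoboundary n.succ_ne_zero hm.1 rigidification_zero
        (fun i hi => by simp [G, Nat.le_of_lt_succ hi]) (by simp [G])
    have hcocycle : IsHochschildCocycle m₀ (homDefect m₀ m G (n + 1)) := by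
      have := (isHochschildCocycle_homDefect hassoc hm rigidification_zero ih).add
        (isHochschildCocycle_hochschildCoboundary hassoc (rigidification m₀ m (n + 1)))
      rwa [hsplit, sub_add_cancel] at this
    rw [hsplit, rigidification, Function.invFun_eq (hH2 _ hcocycle), sub_self]

theorem sum_sum_trivialDeformation (k : ℕ) (u v : ℕ × ℕ → A) :
    ∑ p ∈ antidiagonal k, ∑ q ∈ antidiagonal p.2, TrivialDeformation m₀ p.1 (u q) (v q) =
      ∑ q ∈ antidiagonal k, m₀ (u q) (v q) := by
  rw [sum_antidiagonal_eq_of_snd_lt fun p hp hlt => ?_]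
  · simp [TrivialDeformation]
  · have hp1 : p.1 ≠ 0 := by
      rw [HasAntidiagonal.mem_antidiagonal] at hp
      omega
    simp [TrivialDeformation, hp1]

theorem areEquivalentDeformations_trivialDeformation_of_homDefect
    (hF0 : F 0 = LinearMap.id) (hD : ∀ n, homDefect m₀ m F n = 0) :
    AreEquivalentDeformations m (TrivialDeformation m₀) := by
  refine ⟨F, hF0, fun k x y => ?_⟩
  rw [sum_sum_trivialDeformation, ← sub_eq_zero, ← homDefect_apply, hD, LinearMap.zero_apply,
    LinearMap.zero_apply]

end Deformation

theorem stmt_10_general {K A : Type*} [Field K] [AddCommGroup A] [Module K A]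
    (m₀ : A →ₗ[K] A →ₗ[K] A)
    (hassoc : ∀ x y z : A, m₀ (m₀ x y) z = m₀ x (m₀ y z))
    (hH2 : ∀ φ : A →ₗ[K] A →ₗ[K] A,
      (∀ x y z : A,
        m₀ x (φ y z) - φ (m₀ x y) z + φ x (m₀ y z) - m₀ (φ x y) z = 0) →
      ∃ g : A →ₗ[K] A, ∀ x y : A,
        φ x y = m₀ x (g y) - g (m₀ x y) + m₀ (g x) y) :
    ∀ m : ℕ → A →ₗ[K] A →ₗ[K] A, IsDeformationOf m₀ m →
      AreEquivalentDeformations m (TrivialDeformation m₀) := by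
  intro m hm
  have hH2' : ∀ φ, IsHochschildCocycle m₀ φ → ∃ g, hochschildCoboundary m₀ g = φ :=
    fun φ hφ => (hH2 φ hφ).imp fun g hg => LinearMap.ext₂ fun x y => by
      rw [hochschildCoboundary_apply, hg]
  exact areEquivalentDeformations_trivialDeformation_of_homDefect rigidification_zero
    (homDefect_rigidification hassoc hm hH2')

/-- If `H²(A,A) = 0` (every Hochschild 2-cocycle is a 2-coboundary) for a
finite-dimensional associative algebra `A`, then every formal one-parameter
deformation of `A` is equivalent to the trivial deformation. -/
theorem stmt_10 {K A : Type*} [Field K] [AddCommGroup A] [Module K A]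
    [FiniteDimensional K A]
    (m₀ : A →ₗ[K] A →ₗ[K] A)
    (hassoc : ∀ x y z : A, m₀ (m₀ x y) z = m₀ x (m₀ y z))
    (hH2 : ∀ φ : A →ₗ[K] A →ₗ[K] A,
      (∀ x y z : A,
        m₀ x (φ y z) - φ (m₀ x y) z + φ x (m₀ y z) - m₀ (φ x y) z = 0) →
      ∃ g : A →ₗ[K] A, ∀ x y : A,
        φ x y = m₀ x (g y) - g (m₀ x y) + m₀ (g x) y) :
    ∀ m : ℕ → A →ₗ[K] A →ₗ[K] A, IsDeformationOf m₀ m →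
      AreEquivalentDeformations m (TrivialDeformation m₀) :=
  stmt_10_general m₀ hassoc hH2
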